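/- arXiv:math/0206179 — 4 statements merged into one kernel-verified Lean document; each statement's English description precedes it below -/
import Mathlib

section
/- For every complex number q with 0 < |q| < 1, Σ_{ν=1}^∞ (−1)^{ν−1} q^ν/(1−q^ν) = Σ_{ν=1}^∞ q^ν/(1+q^ν). -/
/-!
Expanding each `q^ν / (1 - q^ν)` as the geometric series `∑_{m ≥ 1} q^{νm}` turns the left-hand
side into the absolutely convergent double series `∑_{ν,m ≥ 1} (-1)^{ν-1} q^{νm}`. Summing it in
the other order, the inner alternating geometric series in `ν` is `q^m / (1 + q^m)`.
-/

section Geometric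

variable {K : Type*} [NormedDivisionRing K] {x : K}

theorem hasSum_pow_succ_of_norm_lt_one (h : ‖x‖ < 1) :
    HasSum (fun n : ℕ ↦ x ^ (n + 1)) (x / (1 - x)) := by
  simpa only [← pow_succ', div_eq_mul_inv] using (hasSum_geometric_of_norm_lt_one h).mul_left x

theorem hasSum_neg_one_pow_mul_pow_succ_of_norm_lt_one (h : ‖x‖ < 1) :
    HasSum (fun n : ℕ ↦ (-1) ^ n * x ^ (n + 1)) (x / (1 + x)) := by
  have hneg := (hasSum_pow_succ_of_norm_lt_one (x := -x) (by rwa [norm_neg])).neg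
  rw [sub_neg_eq_add, neg_div, neg_neg] at hneg
  have hsign (n : ℕ) : -(-x) ^ (n + 1) = (-1) ^ n * x ^ (n + 1) := by
    rw [neg_pow, pow_succ, mul_neg_one, neg_mul, neg_neg]
  simpa only [hsign] using hneg

theorem norm_pow_succ_lt_one (h : ‖x‖ < 1) (n : ℕ) : ‖x ^ (n + 1)‖ < 1 := by
  rw [norm_pow]
  exact pow_lt_one₀ (norm_nonneg x) h n.succ_ne_zero

end Geometric

section Lambert

variable {K : Type*} [NormedField K] [CompleteSpace K] {q : K} {a : ℕ → K} {C : ℝ}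

theorem summable_mul_pow_mul_of_norm_le (hq : ‖q‖ < 1) (ha : ∀ n, ‖a n‖ ≤ C) :
    Summable fun p : ℕ × ℕ ↦ a p.1 * q ^ ((p.1 + 1) * (p.2 + 1)) := by
  have hgeom : Summable fun n : ℕ ↦ ‖q‖ ^ n := summable_geometric_of_lt_one (norm_nonneg q) hq
  refine Summable.of_norm_bounded ((hgeom.mul_of_nonneg hgeom (fun _ ↦ by positivity)
    (fun _ ↦ by positivity)).mul_left C) fun p ↦ ?_
  rw [norm_mul, norm_pow, ← pow_add]
  exact mul_le_mul (ha p.1) (pow_le_pow_of_le_one (norm_nonneg q) hq.le (by nlinarith))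
    (by positivity) ((norm_nonneg _).trans (ha 0))

theorem tsum_mul_div_one_sub_pow_eq_tsum_tsum (hq : ‖q‖ < 1) (ha : ∀ n, ‖a n‖ ≤ C) :
    ∑' n : ℕ, a n * q ^ (n + 1) / (1 - q ^ (n + 1)) =
      ∑' m : ℕ, ∑' n : ℕ, a n * (q ^ (m + 1)) ^ (n + 1) :=
  calc ∑' n : ℕ, a n * q ^ (n + 1) / (1 - q ^ (n + 1))
      = ∑' n : ℕ, ∑' m : ℕ, a n * q ^ ((n + 1) * (m + 1)) := by
        refine tsum_congr fun n ↦ ?_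
        simp_rw [mul_div_assoc, pow_mul]
        exact ((hasSum_pow_succ_of_norm_lt_one (norm_pow_succ_lt_one hq n)).mul_left
          (a n)).tsum_eq.symm
    _ = ∑' m : ℕ, ∑' n : ℕ, a n * q ^ ((n + 1) * (m + 1)) :=
        (Summable.tsum_comm (f := fun n m ↦ a n * q ^ ((n + 1) * (m + 1)))
          (summable_mul_pow_mul_of_norm_le hq ha)).symm
    _ = ∑' m : ℕ, ∑' n : ℕ, a n * (q ^ (m + 1)) ^ (n + 1) :=
        tsum_congr fun m ↦ tsum_congr fun n ↦ by rw [← pow_mul, mul_comm (m + 1)]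

theorem tsum_neg_one_pow_mul_div_one_sub_pow (hq : ‖q‖ < 1) :
    ∑' n : ℕ, (-1 : K) ^ n * q ^ (n + 1) / (1 - q ^ (n + 1)) =
      ∑' n : ℕ, q ^ (n + 1) / (1 + q ^ (n + 1)) := by
  have hsign (n : ℕ) : ‖(-1 : K) ^ n‖ ≤ 1 := by simp
  refine (tsum_mul_div_one_sub_pow_eq_tsum_tsum hq hsign).trans (tsum_congr fun m ↦ ?_)
  exact (hasSum_neg_one_pow_mul_pow_succ_of_norm_lt_one (norm_pow_succ_lt_one hq m)).tsum_eq

end Lambert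

theorem logQTwo_two_representations_general (q : ℂ)
    (hq1 : ‖q‖ < 1) :
    ∑' ν : ℕ, (-1 : ℂ) ^ ν * q ^ (ν + 1) / (1 - q ^ (ν + 1)) =
      ∑' ν : ℕ, q ^ (ν + 1) / (1 + q ^ (ν + 1)) :=
  tsum_neg_one_pow_mul_div_one_sub_pow hq1

theorem logQTwo_two_representations (q : ℂ) (hq0 : 0 < ‖q‖)
    (hq1 : ‖q‖ < 1) :
    ∑' ν : ℕ, (-1 : ℂ) ^ ν * q ^ (ν + 1) / (1 - q ^ (ν + 1)) =
      ∑' ν : ℕ, q ^ (ν + 1) / (1 + q ^ (ν + 1)) :=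
  logQTwo_two_representations_general q hq1
end

section
/- For every integer k ≥ 2, the limit of (1−q)^k ζ_q(k) as q → 1 with q real and 0 < q < 1 equals (k−1)!·ζ(k), where ζ is the Riemann zeta function. -/
/-!
Expanding `1 / (1 - q^ν)` as a geometric series and swapping the two sums gives
`ζ_q(k) = ∑_{m ≥ 1} Li_{1-k}(q^m)`. Comparing `n^K` with falling factorials squeezes
`(1 - x)^(K+1) Li_{-K}(x)` between `K! x^(K+1)` and `K! x`, so each term
`(1 - q)^k Li_{1-k}(q^m)` tends to `(k-1)!/m^k`. Since `q^m ≤ exp (-m(1-q))`, these terms are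
bounded by `C / m^k` uniformly in `q`, and dominated convergence (Tannery) finishes the proof.
-/

open Filter

/-- The q-zeta value `ζ_q(k) = Σ_{ν=1}^∞ ν^{k-1} q^ν/(1-q^ν)` for real `q`. -/
noncomputable def zetaQ (q : ℝ) (k : ℕ) : ℝ :=
  ∑' ν : ℕ, ((ν : ℝ) + 1) ^ (k - 1) * q ^ (ν + 1) / (1 - q ^ (ν + 1))

open Topology Real Nat

section FallingFactorialSeries

variable {𝕜 : Type*} [NormedField 𝕜] {x : 𝕜}

theorem hasSum_add_descFactorial_mul_geometric (K : ℕ) (hx : ‖x‖ < 1) :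
    HasSum (fun n ↦ ((n + K).descFactorial K : 𝕜) * x ^ n) (K ! / (1 - x) ^ (K + 1)) := by
  simpa only [descFactorial_eq_factorial_mul_choose, cast_mul, mul_assoc, mul_one_div] using
    (hasSum_choose_mul_geometric_of_norm_lt_one K hx).mul_left (K ! : 𝕜)

theorem hasSum_descFactorial_mul_geometric (K : ℕ) (hx : ‖x‖ < 1) :
    HasSum (fun n ↦ (n.descFactorial K : 𝕜) * x ^ n) (K ! * x ^ K / (1 - x) ^ (K + 1)) := by
  rw [← hasSum_nat_add_iff' K]
  have hlow : ∀ i ∈ Finset.range K, (i.descFactorial K : 𝕜) * x ^ i = 0 := fun i hi ↦ by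
    rw [descFactorial_eq_zero_iff_lt.2 (Finset.mem_range.1 hi), cast_zero, zero_mul]
  rw [Finset.sum_eq_zero hlow, sub_zero]
  have h := (hasSum_add_descFactorial_mul_geometric K hx).mul_left (x ^ K)
  rw [← mul_div_assoc, mul_comm (x ^ K)] at h
  refine h.congr_fun fun n ↦ ?_
  ring

end FallingFactorialSeries

/-- The polylogarithm `Li_{-K}`. -/
noncomputable def polylogNeg (K : ℕ) (x : ℝ) : ℝ := ∑' ν : ℕ, ((ν : ℝ) + 1) ^ K * x ^ (ν + 1)

section PolylogNeg

variable (K : ℕ) {x : ℝ}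

theorem hasSum_polylogNeg (hx : |x| < 1) :
    HasSum (fun ν : ℕ ↦ ((ν : ℝ) + 1) ^ K * x ^ (ν + 1)) (polylogNeg K x) := by
  have := (summable_nat_add_iff 1).2 (summable_pow_mul_geometric_of_norm_lt_one K (r := x) hx)
  exact (by exact_mod_cast this : Summable _).hasSum

theorem polylogNeg_nonneg (hx : 0 ≤ x) : 0 ≤ polylogNeg K x :=
  tsum_nonneg fun _ ↦ by positivity

theorem polylogNeg_le (hx0 : 0 ≤ x) (hx1 : x < 1) :
    polylogNeg K x ≤ K ! * x / (1 - x) ^ (K + 1) := by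
  have hx : ‖x‖ < 1 := by rwa [Real.norm_of_nonneg hx0]
  have h := (hasSum_add_descFactorial_mul_geometric K hx).mul_left x
  rw [← mul_div_assoc, mul_comm x] at h
  refine hasSum_le (fun ν ↦ ?_) (hasSum_polylogNeg K (abs_lt.2 ⟨by linarith, hx1⟩)) h
  have hpow : (ν + 1) ^ K ≤ (ν + K).descFactorial K := by
    have h := Nat.pow_sub_le_descFactorial (ν + K) K
    rwa [show ν + K + 1 - K = ν + 1 by omega] at h
  calc ((ν : ℝ) + 1) ^ K * x ^ (ν + 1) = x * (((ν : ℝ) + 1) ^ K * x ^ ν) := by ring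
    _ ≤ _ := by gcongr; exact_mod_cast hpow

theorem le_polylogNeg (hx0 : 0 ≤ x) (hx1 : x < 1) :
    K ! * x ^ (K + 1) / (1 - x) ^ (K + 1) ≤ polylogNeg K x := by
  have hx : ‖x‖ < 1 := by rwa [Real.norm_of_nonneg hx0]
  have h := (hasSum_descFactorial_mul_geometric K hx).mul_left x
  rw [← mul_div_assoc, mul_left_comm, ← pow_succ' x K] at h
  refine hasSum_le (fun ν ↦ ?_) h (hasSum_polylogNeg K (abs_lt.2 ⟨by linarith, hx1⟩))
  have hpow : ν.descFactorial K ≤ (ν + 1) ^ K :=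
    (Nat.descFactorial_le_pow ν K).trans (Nat.pow_le_pow_left ν.le_succ K)
  calc x * ((ν.descFactorial K : ℝ) * x ^ ν) = (ν.descFactorial K : ℝ) * x ^ (ν + 1) := by ring
    _ ≤ _ := by gcongr; exact_mod_cast hpow

theorem tendsto_one_sub_pow_mul_polylogNeg :
    Tendsto (fun x ↦ (1 - x) ^ (K + 1) * polylogNeg K x) (𝓝[<] 1) (𝓝 (K ! : ℝ)) := by
  have hlim : ∀ n : ℕ, Tendsto (fun x : ℝ ↦ K ! * x ^ n) (𝓝[<] 1) (𝓝 (K ! : ℝ)) := fun n ↦ by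
    simpa using ((continuous_pow n).const_mul (K ! : ℝ)).continuousWithinAt (x := 1)
      (s := Set.Iio 1) |>.tendsto
  refine tendsto_of_tendsto_of_tendsto_of_le_of_le' (hlim (K + 1)) (hlim 1) ?_ ?_ <;>
    filter_upwards [Ioo_mem_nhdsLT zero_lt_one] with x ⟨hx0, hx1⟩
  · have h := le_polylogNeg K hx0.le hx1
    rw [div_le_iff₀ (by positivity)] at h
    linarith
  · have h := polylogNeg_le K hx0.le hx1
    rw [le_div_iff₀ (by positivity)] at h
    linarith [pow_one x]

end PolylogNeg

theorem tendsto_one_sub_div_one_sub_pow {m : ℕ} (hm : m ≠ 0) :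
    Tendsto (fun q : ℝ ↦ (1 - q) / (1 - q ^ m)) (𝓝[≠] 1) (𝓝 (m : ℝ)⁻¹) := by
  have hsum : Tendsto (fun q : ℝ ↦ ∑ i ∈ Finset.range m, q ^ i) (𝓝[≠] 1) (𝓝 m) := by
    have := (continuous_finsetSum (Finset.range m) fun i _ ↦ continuous_pow i).tendsto (1 : ℝ)
    simpa using this.mono_left nhdsWithin_le_nhds
  refine (hsum.inv₀ (cast_ne_zero.2 hm)).congr' ?_
  filter_upwards [self_mem_nhdsWithin] with q hq
  rw [geom_sum_eq hq, inv_div, ← neg_sub 1 q, ← neg_sub 1 (q ^ m), neg_div_neg_eq]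

theorem pow_mul_div_one_sub_pow_le {q : ℝ} (hq0 : 0 ≤ q) (hq1 : q < 1) {m : ℕ} (hm : m ≠ 0)
    (n : ℕ) : q ^ m * ((1 - q) / (1 - q ^ m)) ^ n ≤ exp 1 * n ! / m ^ n := by
  set t := m * (1 - q) with ht
  have ht0 : 0 ≤ t := mul_nonneg m.cast_nonneg (by linarith)
  have hqm1 : q ^ m < 1 := pow_lt_one₀ hq0 hq1 hm
  have hqm : q ^ m ≤ exp (-t) := by
    calc q ^ m ≤ exp (q - 1) ^ m := by gcongr; linarith [add_one_le_exp (q - 1)]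
      _ = exp (-t) := by rw [← exp_nat_mul, ht]; ring_nf
  have hratio : m * ((1 - q) / (1 - q ^ m)) ≤ 1 + t := by
    have h : q ^ m * (1 + t) ≤ 1 := by
      calc q ^ m * (1 + t) ≤ exp (-t) * exp t := by
            gcongr; linarith [add_one_le_exp t]
        _ = 1 := by rw [← exp_add, neg_add_cancel, exp_zero]
    rw [mul_div_assoc', div_le_iff₀ (by linarith)]
    nlinarith
  calc q ^ m * ((1 - q) / (1 - q ^ m)) ^ n
      = q ^ m * (m * ((1 - q) / (1 - q ^ m))) ^ n / m ^ n := by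
        rw [mul_pow]; field_simp
    _ ≤ exp (-t) * (1 + t) ^ n / m ^ n := by gcongr
    _ ≤ exp (-t) * (n ! * exp (1 + t)) / m ^ n := by
        gcongr
        rw [← div_le_iff₀' (by positivity)]
        exact pow_div_factorial_le_exp (1 + t) (by linarith) n
    _ = exp 1 * n ! / m ^ n := by
        rw [exp_add, exp_neg]; field_simp

theorem one_sub_pow_mul_polylogNeg_pow_le (K : ℕ) {q : ℝ} (hq0 : 0 ≤ q) (hq1 : q < 1) {m : ℕ}
    (hm : m ≠ 0) :
    (1 - q) ^ (K + 1) * polylogNeg K (q ^ m) ≤ K ! * (exp 1 * (K + 1)! / m ^ (K + 1)) := by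
  have hqm1 : q ^ m < 1 := pow_lt_one₀ hq0 hq1 hm
  have h1q : 0 ≤ 1 - q := by linarith
  calc (1 - q) ^ (K + 1) * polylogNeg K (q ^ m)
      ≤ (1 - q) ^ (K + 1) * (K ! * q ^ m / (1 - q ^ m) ^ (K + 1)) := by
        gcongr; exact polylogNeg_le K (by positivity) hqm1
    _ = K ! * (q ^ m * ((1 - q) / (1 - q ^ m)) ^ (K + 1)) := by rw [div_pow]; ring
    _ ≤ _ := by gcongr; exact pow_mul_div_one_sub_pow_le hq0 hq1 hm (K + 1)

theorem tendsto_one_sub_pow_mul_polylogNeg_pow (K : ℕ) {m : ℕ} (hm : m ≠ 0) :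
    Tendsto (fun q : ℝ ↦ (1 - q) ^ (K + 1) * polylogNeg K (q ^ m)) (𝓝[<] 1)
      (𝓝 (K ! / m ^ (K + 1))) := by
  have hpow : Tendsto (fun q : ℝ ↦ q ^ m) (𝓝[<] 1) (𝓝[<] 1) := by
    refine tendsto_nhdsWithin_iff.2 ⟨?_, ?_⟩
    · simpa using ((continuous_pow m).tendsto (1 : ℝ)).mono_left nhdsWithin_le_nhds
    · filter_upwards [Ioo_mem_nhdsLT zero_lt_one] with q hq using pow_lt_one₀ hq.1.le hq.2 hm
  have hratio := (tendsto_one_sub_div_one_sub_pow hm).mono_left (nhdsLT_le_nhdsNE 1)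
  have h := (hratio.pow (K + 1)).mul ((tendsto_one_sub_pow_mul_polylogNeg K).comp hpow)
  rw [inv_pow, ← div_eq_inv_mul] at h
  refine h.congr' ?_
  filter_upwards [Ioo_mem_nhdsLT zero_lt_one] with q ⟨hq0, hq1⟩
  have : 1 - q ^ m ≠ 0 := (sub_pos.2 (pow_lt_one₀ hq0.le hq1 hm)).ne'
  rw [Function.comp_apply, div_pow, ← mul_assoc, div_mul_cancel₀ _ (pow_ne_zero _ this)]

theorem zetaQ_eq_tsum_polylogNeg {q : ℝ} (hq0 : 0 ≤ q) (hq1 : q < 1) (k : ℕ) :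
    zetaQ q k = ∑' m : ℕ, polylogNeg (k - 1) (q ^ (m + 1)) := by
  set K := k - 1
  let f : ℕ → ℕ → ℝ := fun ν m ↦ ((ν : ℝ) + 1) ^ K * (q ^ (ν + 1)) ^ (m + 1)
  have hpow (n : ℕ) : 0 ≤ q ^ (n + 1) ∧ q ^ (n + 1) < 1 :=
    ⟨by positivity, pow_lt_one₀ hq0 hq1 n.succ_ne_zero⟩
  have hrow (ν : ℕ) : HasSum (f ν) (((ν : ℝ) + 1) ^ K * q ^ (ν + 1) / (1 - q ^ (ν + 1))) := by
    have h := (hasSum_geometric_of_lt_one (hpow ν).1 (hpow ν).2).mul_left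
      (((ν : ℝ) + 1) ^ K * q ^ (ν + 1))
    rw [div_eq_mul_inv]
    exact h.congr_fun fun m ↦ by ring
  have hcol (m : ℕ) : HasSum (fun ν ↦ f ν m) (polylogNeg K (q ^ (m + 1))) := by
    have h := hasSum_polylogNeg K (abs_lt.2 ⟨by linarith [(hpow m).1], (hpow m).2⟩)
    refine h.congr_fun fun ν ↦ ?_
    simp only [f, ← pow_mul, mul_comm (ν + 1)]
  have hrowsum : Summable fun ν : ℕ ↦ ((ν : ℝ) + 1) ^ K * q ^ (ν + 1) / (1 - q ^ (ν + 1)) := by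
    have hLi := (hasSum_polylogNeg K (abs_lt.2 ⟨by linarith, hq1⟩)).summable
    refine (hLi.div_const (1 - q)).of_nonneg_of_le
      (fun ν ↦ div_nonneg (by positivity) (by linarith [(hpow ν).2])) fun ν ↦ ?_
    gcongr
    exact pow_le_of_le_one hq0 hq1.le ν.succ_ne_zero
  have hf : Summable (Function.uncurry f) := by
    refine (summable_prod_of_nonneg fun p ↦ ?_).2 ⟨fun ν ↦ (hrow ν).summable, ?_⟩
    · simp only [Pi.zero_apply, Function.uncurry, f]
      positivity
    · simpa only [Function.uncurry, (hrow _).tsum_eq] using hrowsum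
  calc zetaQ q k = ∑' ν, ∑' m, f ν m := tsum_congr fun ν ↦ (hrow ν).tsum_eq.symm
    _ = ∑' m, ∑' ν, f ν m :=
      (hf.tsum_comm' (fun ν ↦ (hrow ν).summable) fun m ↦ (hcol m).summable).symm
    _ = _ := tsum_congr fun m ↦ (hcol m).tsum_eq

theorem zetaQ_limit (k : ℕ) (hk : 2 ≤ k) :
    Tendsto (fun q : ℝ => (1 - q) ^ k * zetaQ q k) (nhdsWithin 1 (Set.Ioo 0 1))
      (nhds ((Nat.factorial (k - 1) : ℝ) * ∑' n : ℕ, 1 / ((n : ℝ) + 1) ^ k)) := by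
  obtain ⟨K, rfl⟩ : ∃ K, k = K + 1 := ⟨k - 1, by omega⟩
  have hsummable : Summable fun m : ℕ ↦ 1 / ((m : ℝ) + 1) ^ (K + 1) := by
    exact_mod_cast (summable_nat_add_iff 1).2 (Real.summable_one_div_nat_pow.2 (by omega))
  have hlim : Tendsto (fun q : ℝ ↦ ∑' m : ℕ, (1 - q) ^ (K + 1) * polylogNeg K (q ^ (m + 1)))
      (𝓝[<] 1) (𝓝 (∑' m : ℕ, K ! / ((m : ℝ) + 1) ^ (K + 1))) := by
    refine tendsto_tsum_of_dominated_convergence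
      (hsummable.mul_left (K ! * (exp 1 * (K + 1)!))) (fun m ↦ ?_) ?_
    · exact_mod_cast tendsto_one_sub_pow_mul_polylogNeg_pow K m.succ_ne_zero
    · filter_upwards [Ioo_mem_nhdsLT zero_lt_one] with q ⟨hq0, hq1⟩ m
      have hnonneg := polylogNeg_nonneg K (pow_nonneg hq0.le (m + 1))
      rw [Real.norm_of_nonneg (mul_nonneg (pow_nonneg (by linarith) _) hnonneg)]
      convert one_sub_pow_mul_polylogNeg_pow_le K hq0.le hq1 m.succ_ne_zero using 1
      push_cast
      ring
  rw [Nat.add_sub_cancel, ← tsum_mul_left]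
  simp only [mul_one_div]
  refine (hlim.mono_left (nhdsWithin_mono 1 Set.Ioo_subset_Iio_self)).congr' ?_
  filter_upwards [self_mem_nhdsWithin] with q ⟨hq0, hq1⟩
  rw [zetaQ_eq_tsum_polylogNeg hq0.le hq1, ← tsum_mul_left, Nat.add_sub_cancel]
end

section
/- Let the polynomials ρ_k(x) ∈ ℤ[x] be defined recursively by ρ_1(x) = 1 and ρ_{k+1}(x) = (1+(k−1)x)ρ_k(x) + x(1−x)ρ_k′(x) for k = 1, 2, …. Then for every integer k ≥ 1 and every complex number q with 0 < |q| < 1, Σ_{ν=1}^∞ ν^{k−1} q^ν/(1−q^ν) = Σ_{ν=1}^∞ q^ν ρ_k(q^ν)/(1−q^ν)^k. -/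
/-!
Expanding `q^ν / (1 - q^ν)` as a geometric series and swapping the absolutely convergent double
sum turns the left side into `∑_μ ∑_ν ν^{k-1} (q^μ)^ν`, so it suffices to show
`∑_{ν ≥ 1} ν^{k-1} x^ν = x ρ_k(x) / (1 - x)^k` for `‖x‖ < 1`. For `k = 1` this is the geometric
series, and differentiating termwise passes from `k` to `k + 1`: the recursion defining `ρ_{k+1}`
is precisely the quotient rule `d/dx (x ρ_k(x) / (1 - x)^k) = ρ_{k+1}(x) / (1 - x)^{k+1}`.
-/

open Polynomial

/-- The polynomials `ρ_k ∈ ℤ[x]` defined by `ρ_1 = 1` and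
`ρ_{k+1} = (1 + (k-1)x) ρ_k + x(1-x) ρ_k'`. (`rho 0` is a junk value.) -/
noncomputable def rho : ℕ → Polynomial ℤ
  | 0 => 0
  | 1 => 1
  | (k + 2) =>
      (1 + (C (k : ℤ)) * X) * rho (k + 1) + X * (1 - X) * derivative (rho (k + 1))

theorem summable_succ_pow_mul_geometric_of_norm_lt_one {R : Type*} [NormedCommRing R]
    [CompleteSpace R] (j : ℕ) {r : R} (hr : ‖r‖ < 1) :
    Summable fun n : ℕ => ((n : R) + 1) ^ j * r ^ n := by
  simp_rw [add_pow, one_pow, mul_one, Finset.sum_mul]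
  refine summable_sum fun i _ => ?_
  simpa only [mul_right_comm] using (summable_pow_mul_geometric_of_norm_lt_one i hr).mul_right
    ((j.choose i : ℕ) : R)

section NormedField

variable {K : Type*} [NormedField K]

theorem hasSum_geometric_succ_of_norm_lt_one {x : K} (hx : ‖x‖ < 1) :
    HasSum (fun n : ℕ => x ^ (n + 1)) (x / (1 - x)) := by
  simpa [pow_succ', div_eq_mul_inv] using (hasSum_geometric_of_norm_lt_one hx).mul_left x

theorem tsum_lambert_eq_tsum_tsum [CompleteSpace K] {a : ℕ → K} {q : K} (hq : ‖q‖ < 1)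
    (ha : Summable fun n : ℕ => ‖a n * q ^ n‖) :
    ∑' n : ℕ, a n * q ^ (n + 1) / (1 - q ^ (n + 1)) =
      ∑' m : ℕ, ∑' n : ℕ, a n * (q ^ (m + 1)) ^ (n + 1) := by
  have hqn (n : ℕ) : ‖q ^ (n + 1)‖ < 1 := by
    rw [norm_pow]
    exact pow_lt_one₀ (norm_nonneg q) hq n.succ_ne_zero
  have hsum : Summable (Function.uncurry fun n m : ℕ => a n * q ^ ((n + 1) * (m + 1))) := by
    refine Summable.of_norm_bounded ((ha.mul_of_nonneg (summable_geometric_of_lt_one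
      (norm_nonneg q) hq) (fun _ => by positivity) (fun _ => by positivity))) fun p => ?_
    rw [Function.uncurry_apply_pair, norm_mul, norm_mul, norm_pow, norm_pow, mul_assoc,
      ← pow_add]
    refine mul_le_mul_of_nonneg_left (pow_le_pow_of_le_one (norm_nonneg q) hq.le ?_)
      (norm_nonneg _)
    nlinarith
  calc ∑' n : ℕ, a n * q ^ (n + 1) / (1 - q ^ (n + 1))
      = ∑' n : ℕ, ∑' m : ℕ, a n * q ^ ((n + 1) * (m + 1)) := by
        refine tsum_congr fun n => ?_
        rw [mul_div_assoc, ← (hasSum_geometric_succ_of_norm_lt_one (hqn n)).tsum_eq,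
          ← tsum_mul_left]
        simp_rw [pow_mul]
    _ = ∑' m : ℕ, ∑' n : ℕ, a n * q ^ ((n + 1) * (m + 1)) := hsum.tsum_comm.symm
    _ = ∑' m : ℕ, ∑' n : ℕ, a n * (q ^ (m + 1)) ^ (n + 1) := by
        simp_rw [← pow_mul, mul_comm (_ + 1) (_ + 1)]

end NormedField

theorem aeval_rho_add_two {A : Type*} [CommRing A] (k : ℕ) (x : A) :
    aeval x (rho (k + 2)) =
      (1 + k * x) * aeval x (rho (k + 1)) + x * (1 - x) * aeval x (derivative (rho (k + 1))) := by
  simp [rho]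

theorem hasDerivAt_mul_aeval_rho_div {𝕜 : Type*} [NontriviallyNormedField 𝕜] (k : ℕ) {x : 𝕜}
    (hx : x ≠ 1) :
    HasDerivAt (fun y => y * aeval y (rho (k + 1)) / (1 - y) ^ (k + 1))
      (aeval x (rho (k + 2)) / (1 - x) ^ (k + 2)) x := by
  have hx' : 1 - x ≠ 0 := sub_ne_zero.mpr hx.symm
  have h := ((hasDerivAt_id' x).fun_mul ((rho (k + 1)).hasDerivAt_aeval x)).fun_div
    (((hasDerivAt_id' x).const_sub 1).fun_pow (k + 1)) (pow_ne_zero _ hx')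
  refine h.congr_deriv ?_
  rw [aeval_rho_add_two]
  field_simp
  push_cast
  ring

section RCLike

variable {𝕜 : Type*} [RCLike 𝕜]

theorem hasDerivAt_tsum_succ_pow_mul_pow_succ (j : ℕ) {x : 𝕜} (hx : ‖x‖ < 1) :
    HasDerivAt (fun y => ∑' n : ℕ, ((n : 𝕜) + 1) ^ j * y ^ (n + 1))
      (∑' n : ℕ, ((n : 𝕜) + 1) ^ (j + 1) * x ^ n) x := by
  obtain ⟨r, hxr, hr⟩ := exists_between hx
  have hr0 : 0 ≤ r := (norm_nonneg x).trans hxr.le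
  refine hasDerivAt_tsum_of_isPreconnected (t := Metric.ball (0 : 𝕜) r)
    (g := fun (n : ℕ) y => ((n : 𝕜) + 1) ^ j * y ^ (n + 1))
    (g' := fun (n : ℕ) y => ((n : 𝕜) + 1) ^ (j + 1) * y ^ n)
    (summable_succ_pow_mul_geometric_of_norm_lt_one (j + 1) (r := r)
      (by simpa [abs_of_nonneg hr0]))
    Metric.isOpen_ball (convex_ball 0 r).isPreconnected (fun n y _ => ?_) (fun n y hy => ?_)
    (Metric.mem_ball_self ((norm_nonneg x).trans_lt hxr)) ?_ (by simpa using hxr)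
  · refine ((hasDerivAt_pow (n + 1) y).const_mul (((n : 𝕜) + 1) ^ j)).congr_deriv ?_
    push_cast
    ring
  · rw [mem_ball_zero_iff] at hy
    have hn : ‖(n : 𝕜) + 1‖ = n + 1 := by exact_mod_cast RCLike.norm_natCast (K := 𝕜) (n + 1)
    rw [norm_mul, norm_pow, norm_pow, hn]
    gcongr
  · simp

theorem hasSum_succ_pow_mul_pow_succ_rho (k : ℕ) {x : 𝕜} (hx : ‖x‖ < 1) :
    HasSum (fun n : ℕ => ((n : 𝕜) + 1) ^ k * x ^ (n + 1))
      (x * aeval x (rho (k + 1)) / (1 - x) ^ (k + 1)) := by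
  induction k generalizing x with
  | zero => simpa [rho] using hasSum_geometric_succ_of_norm_lt_one hx
  | succ k ih =>
    have hx1 : x ≠ 1 := by
      rintro rfl
      simp at hx
    have hderiv : ∑' n : ℕ, ((n : 𝕜) + 1) ^ (k + 1) * x ^ n =
        aeval x (rho (k + 2)) / (1 - x) ^ (k + 2) := by
      have heq : (fun y : 𝕜 => y * aeval y (rho (k + 1)) / (1 - y) ^ (k + 1)) =ᶠ[nhds x]
          fun y => ∑' n : ℕ, ((n : 𝕜) + 1) ^ k * y ^ (n + 1) := by
        filter_upwards [Metric.isOpen_ball.mem_nhds (mem_ball_zero_iff.mpr hx)] with y hy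
        exact (ih (mem_ball_zero_iff.mp hy)).tsum_eq.symm
      exact (hasDerivAt_tsum_succ_pow_mul_pow_succ k hx).unique
        ((hasDerivAt_mul_aeval_rho_div k hx1).congr_of_eventuallyEq heq.symm)
    have hsum := (summable_succ_pow_mul_geometric_of_norm_lt_one (k + 1) hx).hasSum.mul_left x
    rw [hderiv, ← mul_div_assoc] at hsum
    refine hsum.congr_fun fun n => ?_
    ring

end RCLike

theorem lambert_series_eq_rho_series_general (k : ℕ) (hk : 1 ≤ k) (q : ℂ)
    (hq1 : ‖q‖ < 1) :
    ∑' ν : ℕ, ((ν : ℂ) + 1) ^ (k - 1) * q ^ (ν + 1) / (1 - q ^ (ν + 1)) =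
      ∑' ν : ℕ, q ^ (ν + 1) * (Polynomial.aeval (q ^ (ν + 1)) (rho k)) /
        (1 - q ^ (ν + 1)) ^ k := by
  obtain ⟨j, rfl⟩ := Nat.exists_eq_add_of_le' hk
  rw [Nat.add_sub_cancel, tsum_lambert_eq_tsum_tsum hq1
    (summable_succ_pow_mul_geometric_of_norm_lt_one j hq1).norm]
  refine tsum_congr fun m => (hasSum_succ_pow_mul_pow_succ_rho j ?_).tsum_eq
  rw [norm_pow]
  exact pow_lt_one₀ (norm_nonneg q) hq1 m.succ_ne_zero

theorem lambert_series_eq_rho_series (k : ℕ) (hk : 1 ≤ k) (q : ℂ)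
    (hq0 : 0 < ‖q‖) (hq1 : ‖q‖ < 1) :
    ∑' ν : ℕ, ((ν : ℂ) + 1) ^ (k - 1) * q ^ (ν + 1) / (1 - q ^ (ν + 1)) =
      ∑' ν : ℕ, q ^ (ν + 1) * (Polynomial.aeval (q ^ (ν + 1)) (rho k)) /
        (1 - q ^ (ν + 1)) ^ k :=
  lambert_series_eq_rho_series_general k hk q hq1
end

section
/- Let p be an integer with |p| ≥ 2 and set D_n(p) = Π_{l=1}^n Φ_l(p), where Φ_l is the l-th cyclotomic polynomial. Then lim_{n→∞} log|D_n(p)|/(n² log|p|) = 3/π². -/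
/-!
Möbius inversion of `∏_{d ∣ l} Φ_d(p) = p^l - 1` gives
`log |Φ_l(p)| = ∑_{ab = l} μ(a) log |p^b - 1|`, while `φ(l) = ∑_{ab = l} μ(a) b`. Since
`log |p^b - 1| = b log |p| + O(2^{-b})`, this yields `log |Φ_l(p)| = φ(l) log |p| + O(1)`, hence
`log |D_n(p)| = (∑_{l ≤ n} φ(l)) log |p| + O(n)`. Finally
`∑_{l ≤ n} φ(l) = ∑_{a ≤ n} μ(a) ⌊n/a⌋(⌊n/a⌋ + 1)/2 ∼ (n²/2) ∑_a μ(a)/a² = (n²/2) / ζ(2) = 3n²/π²`,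
the limit being justified by dominated convergence, since the `a`-th term is at most `n²/a²`.
-/

open Polynomial Filter Real

/-- `D_n(p) = Π_{l=1}^n Φ_l(p)`, the common denominator (q-analogue of lcm(1,…,n)). -/
noncomputable def Dpoly (p : ℤ) (n : ℕ) : ℤ := ∏ l ∈ Finset.Icc 1 n, (cyclotomic l ℤ).eval p

open ArithmeticFunction Finset
open scoped ArithmeticFunction.Moebius Nat Topology

theorem abs_log_one_sub_le {y : ℝ} (hy : |y| ≤ 1 / 2) : |log (1 - y)| ≤ 2 * |y| := by
  have h := abs_log_sub_add_sum_range_le (hy.trans_lt (by norm_num)) 0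
  rw [sum_range_zero, zero_add, pow_one] at h
  calc |log (1 - y)| ≤ |y| / (1 - |y|) := h
    _ ≤ 2 * |y| := by rw [div_le_iff₀ (by linarith)]; nlinarith [abs_nonneg y]

theorem pow_ne_one_of_one_lt_abs {x : ℝ} (hx : 1 < |x|) {n : ℕ} (hn : n ≠ 0) : x ^ n ≠ 1 :=
  fun h => hx.ne' ((abs_pow_eq_one x hn).mp (by rw [h, abs_one]))

theorem abs_log_abs_pow_sub_one_sub_le {x : ℝ} (hx : 2 ≤ |x|) {b : ℕ} (hb : b ≠ 0) :
    |log |x ^ b - 1| - b * log (|x|)| ≤ 2 * (1 / 2) ^ b := by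
  have hxb : (1 / 2 : ℝ) ^ b ≤ 1 / 2 := pow_le_of_le_one (by norm_num) (by norm_num) hb
  have hy : |(x ^ b)⁻¹| ≤ (1 / 2) ^ b := by
    rw [abs_inv, abs_pow, ← inv_pow, one_div]
    gcongr
  have hx0 : x ^ b ≠ 0 := pow_ne_zero _ (abs_pos.mp (two_pos.trans_le hx))
  have h1y : 1 - (x ^ b)⁻¹ ≠ 0 := by
    intro h; linarith [le_abs_self (x ^ b)⁻¹, sub_eq_zero.mp h]
  have hsplit : x ^ b - 1 = x ^ b * (1 - (x ^ b)⁻¹) := by field_simp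
  simp only [hsplit, log_abs]
  rw [log_mul hx0 h1y, log_pow, add_sub_cancel_left]
  exact (abs_log_one_sub_le (hy.trans hxb)).trans (by gcongr)

theorem tendsto_natCast_div_div_self {a : ℕ} (ha : a ≠ 0) :
    Tendsto (fun n : ℕ => ((n / a : ℕ) : ℝ) / n) atTop (𝓝 (1 / a)) := by
  have ha' : (0 : ℝ) < a := by positivity
  have h := (tendsto_nat_floor_div_atTop.comp
    (tendsto_natCast_atTop_atTop.atTop_div_const ha')).mul_const (1 / (a : ℝ))
  rw [one_mul] at h
  refine h.congr fun n => ?_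
  simp only [Function.comp_apply, ← Nat.floor_div_eq_div (K := ℝ)]
  field_simp

theorem Filter.Tendsto.div_sq_of_abs_sub_le {a b : ℕ → ℝ} {C L : ℝ}
    (hb : Tendsto (fun n : ℕ => b n / (n : ℝ) ^ 2) atTop (𝓝 L)) (hab : ∀ n, |a n - b n| ≤ C * n) :
    Tendsto (fun n : ℕ => a n / (n : ℝ) ^ 2) atTop (𝓝 L) := by
  have h_err : Tendsto (fun n : ℕ => (a n - b n) / (n : ℝ) ^ 2) atTop (𝓝 0) := by
    refine squeeze_zero_norm (fun n => ?_) (tendsto_const_div_atTop_nhds_zero_nat C)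
    rw [norm_div, Real.norm_eq_abs, norm_pow, Real.norm_natCast]
    rcases n.eq_zero_or_pos with rfl | hn
    · simp
    · calc |a n - b n| / (n : ℝ) ^ 2 ≤ C * n / (n : ℝ) ^ 2 := by gcongr; exact hab n
        _ = C / n := by field_simp
  simpa [← add_div] using hb.add h_err

open scoped LSeries.notation in
theorem hasSum_moebius_div_sq :
    HasSum (fun n : ℕ => (μ n : ℝ) / (n : ℝ) ^ 2) (6 / π ^ 2) := by
  have hs : 1 < (2 : ℂ).re := by norm_num
  have hL : L ↗μ 2 = 6 / (π : ℂ) ^ 2 := by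
    have h := LSeries_one_mul_Lseries_moebius hs
    rw [LSeries_one_eq_riemannZeta hs, riemannZeta_two] at h
    have : (π : ℂ) ≠ 0 := by exact_mod_cast pi_ne_zero
    field_simp at h ⊢
    linear_combination h
  have h : HasSum (LSeries.term ↗μ 2) (6 / (π : ℂ) ^ 2) :=
    hL ▸ (LSeriesSummable_moebius_iff.mpr hs).LSeriesHasSum
  refine Complex.hasSum_ofReal.mp ?_
  convert h using 1
  · ext n
    rcases eq_or_ne n 0 with rfl | hn
    · simp
    · simp [LSeries.term_of_ne_zero hn]
  · push_cast; rfl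

theorem totient_eq_sum_moebius_mul {n : ℕ} (hn : 0 < n) :
    (φ n : ℝ) = ∑ x ∈ n.divisorsAntidiagonal, (μ x.1 : ℝ) * x.2 :=
  (sum_eq_iff_sum_mul_moebius_eq (f := fun d => (φ d : ℝ)) (g := fun d => (d : ℝ)) |>.mp
    (fun m _ => by exact_mod_cast Nat.sum_totient m) n hn).symm

theorem coe_moebius_mul_coe_id_apply (n : ℕ) :
    ((μ : ArithmeticFunction ℝ) * ArithmeticFunction.id) n = φ n := by
  rcases n.eq_zero_or_pos with rfl | hn
  · simp
  · simp [mul_apply, totient_eq_sum_moebius_mul hn]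

theorem sum_Ioc_id (k : ℕ) : ∑ m ∈ Ioc 0 k, (m : ℝ) = k * (k + 1) / 2 := by
  induction k with
  | zero => simp
  | succ k ih => rw [sum_Ioc_succ_top (Nat.zero_le k), ih]; push_cast; ring

theorem tendsto_triangle_div_sq {a : ℕ} (ha : a ≠ 0) :
    Tendsto (fun n : ℕ => ((n / a : ℕ) : ℝ) * ((n / a : ℕ) + 1) / 2 / n ^ 2) atTop
      (𝓝 (1 / (a : ℝ) ^ 2 / 2)) := by
  have h := (tendsto_natCast_div_div_self ha).mul
    ((tendsto_natCast_div_div_self ha).add tendsto_one_div_atTop_nhds_zero_nat)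
  rw [add_zero] at h
  convert h.div_const 2 using 2 <;> ring

theorem triangle_div_sq_le (n a : ℕ) :
    ((n / a : ℕ) : ℝ) * ((n / a : ℕ) + 1) / 2 / n ^ 2 ≤ 1 / a ^ 2 := by
  set k := n / a
  rcases Nat.eq_zero_or_pos k with h0 | hpos
  · simp [h0]
  obtain ⟨ha, han⟩ := Nat.div_pos_iff.mp hpos
  have hn : 0 < n := ha.trans_le han
  have hka : (k : ℝ) * a ≤ n := by exact_mod_cast Nat.div_mul_le_self n a
  have hk1 : (1 : ℝ) ≤ k := by exact_mod_cast hpos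
  rw [div_le_div_iff₀ (by positivity) (by positivity)]
  calc (k : ℝ) * (k + 1) / 2 * a ^ 2 ≤ ((k : ℝ) * a) ^ 2 := by
        nlinarith [sq_nonneg (a : ℝ)]
    _ ≤ 1 * (n : ℝ) ^ 2 := by rw [one_mul]; gcongr

theorem tendsto_sum_Ioc_mul_id_div_sq {c : ArithmeticFunction ℝ} {C : ℝ} (hc : ∀ a, |c a| ≤ C) :
    Tendsto (fun n : ℕ => (∑ l ∈ Ioc 0 n, (c * ArithmeticFunction.id) l) / (n : ℝ) ^ 2) atTop
      (𝓝 ((∑' a : ℕ, c a / (a : ℝ) ^ 2) / 2)) := by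
  let term (n a : ℕ) : ℝ := c a * (((n / a : ℕ) : ℝ) * ((n / a : ℕ) + 1) / 2 / n ^ 2)
  have h_eq (n : ℕ) :
      (∑ l ∈ Ioc 0 n, (c * ArithmeticFunction.id) l) / (n : ℝ) ^ 2 = ∑' a, term n a := by
    rw [tsum_eq_sum (s := Ioc 0 n), sum_Ioc_mul_eq_sum_sum, sum_div]
    · refine sum_congr rfl fun a _ => ?_
      simp only [natCoe_apply, id_apply, sum_Ioc_id, term]
      ring
    -- outside `Ioc 0 n` the quotient `n / a` vanishes, for `a = 0` by the convention `n / 0 = 0`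
    · intro a ha
      rw [mem_Ioc, not_and_or, not_lt, Nat.le_zero, not_le] at ha
      rcases ha with rfl | ha <;> simp [term, Nat.div_eq_of_lt, *]
  have h_lim (a : ℕ) : Tendsto (term · a) atTop (𝓝 (c a / (a : ℝ) ^ 2 / 2)) := by
    rcases eq_or_ne a 0 with rfl | ha
    · simp [term]
    · convert (tendsto_triangle_div_sq ha).const_mul (c a) using 2
      ring
  have h_bound : ∀ᶠ n in atTop, ∀ a, ‖term n a‖ ≤ C * (1 / (a : ℝ) ^ 2) := by
    refine .of_forall fun n a => ?_
    rw [norm_mul, Real.norm_eq_abs, Real.norm_of_nonneg (by positivity)]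
    exact mul_le_mul (hc a) (triangle_div_sq_le n a) (by positivity) ((abs_nonneg _).trans (hc a))
  have h_sum : Summable fun a : ℕ => C * (1 / (a : ℝ) ^ 2) :=
    (Real.summable_one_div_nat_pow.mpr one_lt_two).mul_left C
  simp_rw [h_eq, ← tsum_div_const]
  exact tendsto_tsum_of_dominated_convergence h_sum h_lim h_bound

theorem tendsto_sum_totient_div_sq :
    Tendsto (fun n : ℕ => (∑ l ∈ Ioc 0 n, (φ l : ℝ)) / (n : ℝ) ^ 2) atTop (𝓝 (3 / π ^ 2)) := by
  have h := tendsto_sum_Ioc_mul_id_div_sq (c := μ) (C := 1) fun a => by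
    rw [intCoe_apply]; exact_mod_cast abs_moebius_le_one
  simp only [coe_moebius_mul_coe_id_apply, intCoe_apply, hasSum_moebius_div_sq.tsum_eq] at h
  convert h using 2
  ring

theorem eval_cyclotomic_ne_zero_of_pow_ne_one {R : Type*} [CommRing R] {x : R} {n : ℕ}
    (hx : x ^ n ≠ 1) : (cyclotomic n R).eval x ≠ 0 := by
  rcases n.eq_zero_or_pos with rfl | hn
  · exact absurd (pow_zero x) hx
  intro h
  have hdvd := eval_dvd (x := x) (cyclotomic.dvd_X_pow_sub_one n R)
  rw [h, eval_sub, eval_pow, eval_X, eval_one, zero_dvd_iff, sub_eq_zero] at hdvd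
  exact hx hdvd

theorem log_abs_eval_cyclotomic_eq_sum_moebius {x : ℝ} (hx : 1 < |x|) {n : ℕ} (hn : 0 < n) :
    log |(cyclotomic n ℝ).eval x| =
      ∑ d ∈ n.divisorsAntidiagonal, (μ d.1 : ℝ) * log |x ^ d.2 - 1| := by
  refine (sum_eq_iff_sum_mul_moebius_eq (f := fun d => log |(cyclotomic d ℝ).eval x|)
    (g := fun m => log |x ^ m - 1|) |>.mp (fun m hm => ?_) n hn).symm
  rw [← log_prod, ← abs_prod, ← eval_prod, prod_cyclotomic_eq_X_pow_sub_one hm]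
  · simp
  · intro d hd
    exact abs_ne_zero.mpr (eval_cyclotomic_ne_zero_of_pow_ne_one
      (pow_ne_one_of_one_lt_abs hx (Nat.pos_of_mem_divisors hd).ne'))

theorem abs_log_abs_eval_cyclotomic_sub_totient_mul_le {x : ℝ} (hx : 2 ≤ |x|) {n : ℕ}
    (hn : 0 < n) : |log |(cyclotomic n ℝ).eval x| - φ n * log (|x|)| ≤ 2 := by
  rw [log_abs_eval_cyclotomic_eq_sum_moebius (by linarith) hn, totient_eq_sum_moebius_mul hn,
    sum_mul, ← sum_sub_distrib]
  calc _ ≤ ∑ d ∈ n.divisorsAntidiagonal, 2 * (1 / 2 : ℝ) ^ d.2 := by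
        refine (abs_sum_le_sum_abs _ _).trans (sum_le_sum fun d hd => ?_)
        rw [mul_assoc, ← mul_sub, abs_mul]
        have hμ : |(μ d.1 : ℝ)| ≤ 1 := by exact_mod_cast abs_moebius_le_one
        have hd : d.2 ≠ 0 :=
          (Nat.pos_of_mem_divisors (Nat.snd_mem_divisors_of_mem_antidiagonal hd)).ne'
        exact (mul_le_of_le_one_left (abs_nonneg _) hμ).trans
          (abs_log_abs_pow_sub_one_sub_le hx hd)
    _ = 2 * ∑ b ∈ n.divisors, (1 / 2 : ℝ) ^ b := by
        rw [Nat.sum_divisorsAntidiagonal' (fun _ b => 2 * (1 / 2 : ℝ) ^ b), mul_sum]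
    _ ≤ 2 * ∑ b ∈ Ico 1 (n + 1), (1 / 2 : ℝ) ^ b := by
        gcongr
        exact filter_subset _ _
    _ ≤ 2 * ((1 / 2) ^ 1 / (1 - 1 / 2)) := by
        gcongr
        exact geom_sum_Ico_le_of_lt_one (by norm_num) (by norm_num)
    _ = 2 := by norm_num

theorem cast_Dpoly (p : ℤ) (n : ℕ) :
    (Dpoly p n : ℝ) = ∏ l ∈ Ioc 0 n, (cyclotomic l ℝ).eval (p : ℝ) := by
  rw [Dpoly, ← Icc_add_one_left_eq_Ioc, zero_add, Int.cast_prod]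
  exact prod_congr rfl fun l _ => (cyclotomic.eval_apply p l (Int.castRingHom ℝ)).symm

theorem abs_log_abs_Dpoly_sub_le {p : ℤ} (hp : 2 ≤ |p|) (n : ℕ) :
    |log |(Dpoly p n : ℝ)| - (∑ l ∈ Ioc 0 n, (φ l : ℝ)) * log (|(p : ℝ)|)| ≤ 2 * n := by
  have hp' : (2 : ℝ) ≤ |(p : ℝ)| := by exact_mod_cast hp
  rw [cast_Dpoly, abs_prod, log_prod, sum_mul, ← sum_sub_distrib]
  · calc _ ≤ ∑ l ∈ Ioc 0 n, (2 : ℝ) := (abs_sum_le_sum_abs _ _).trans (sum_le_sum fun l hl =>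
          abs_log_abs_eval_cyclotomic_sub_totient_mul_le hp' (mem_Ioc.mp hl).1)
      _ = 2 * n := by simp [mul_comm]
  · intro l hl
    exact abs_ne_zero.mpr (eval_cyclotomic_ne_zero_of_pow_ne_one
      (pow_ne_one_of_one_lt_abs (by linarith) (mem_Ioc.mp hl).1.ne'))

theorem Dpoly_asymptotics (p : ℤ) (hp : 2 ≤ |p|) :
    Tendsto (fun n : ℕ => Real.log |(Dpoly p n : ℝ)| / ((n : ℝ) ^ 2 * Real.log |(p : ℝ)|))
      atTop (nhds (3 / Real.pi ^ 2)) := by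
  have hlog : 0 < log |(p : ℝ)| := log_pos (by exact_mod_cast one_lt_two.trans_le hp)
  have h := tendsto_sum_totient_div_sq.div_sq_of_abs_sub_le
    (a := fun n => log |(Dpoly p n : ℝ)| / log |(p : ℝ)|) (C := 2 / log |(p : ℝ)|) fun n => by
      rw [div_sub' hlog.ne', abs_div, abs_of_pos hlog, div_mul_eq_mul_div,
        mul_comm (Real.log _)]
      exact div_le_div_of_nonneg_right (abs_log_abs_Dpoly_sub_le hp n) hlog.le
  convert h using 2 with n
  rw [div_div, mul_comm]
end
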